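/- Let n, m : ℕ and let C : V_n → V_m → V_n → V_m → Prop. Then there exists a function g : V_n → V_m such that C w (g w) w' (g w') holds for all w, w' ∈ V_n, if and only if there exist a nonempty type A and functions r : A → V_n and s : A → V_m satisfying: (α1) for all a, b : A, if r a = r b then s a = s b; (α2) for all a, b : A, C (r a) (s a) (r b) (s b); and (β) for every a : A there exists b : A with num(r b) = (num(r a) + 1) mod 2^n. -/

import Mathlib

/-- `num v` is the number encoded by the boolean vector `v`. -/
def num {n : ℕ} (v : Fin n → Bool) : ℕ :=
  ∑ i : Fin n, 2 ^ (i : ℕ) * (if v i then 1 else 0)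

/-!
The R-strings of a structure satisfying (β) contain some `r a₀` and are closed under the
successor modulo `2 ^ n`; iterating from `r a₀` therefore reaches every vector, so `r` is
surjective. Choosing a preimage of each vector then turns `s` into a function `g` on all of
`V_n`, and (α2) becomes the circuit condition for `g`. Conversely `V_n` itself, with `r = id`
and `s = g`, is such a structure.
-/

open Function

noncomputable def numEquiv (n : ℕ) : (Fin n → Bool) ≃ Fin (2 ^ n) :=
  (Equiv.arrowCongr (Equiv.refl _) finTwoEquiv.symm).trans finFunctionFinEquiv

@[simp]
lemma val_numEquiv {n : ℕ} (v : Fin n → Bool) : (numEquiv n v : ℕ) = num v := by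
  simp only [numEquiv, num, Equiv.trans_apply, finFunctionFinEquiv_apply, Equiv.arrowCongr_apply,
    Equiv.refl_symm, Equiv.coe_refl, Function.comp_apply]
  congr 1; ext i; cases h : v i <;> simp [h, finTwoEquiv]

lemma num_eq_num_add_one_mod_iff {n : ℕ} (v w : Fin n → Bool) :
    num w = (num v + 1) % 2 ^ n ↔ numEquiv n w = numEquiv n v + 1 := by
  rw [Fin.ext_iff, Fin.val_add, Fin.val_one', Nat.add_mod_mod, val_numEquiv, val_numEquiv]

lemma exists_num_eq {n k : ℕ} (hk : k < 2 ^ n) : ∃ v : Fin n → Bool, num v = k :=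
  ⟨(numEquiv n).symm ⟨k, hk⟩, by rw [← val_numEquiv, Equiv.apply_symm_apply]⟩

open Fin.NatCast in
lemma Fin.surjective_of_forall_exists_eq_add_one {A : Type*} [Nonempty A] {N : ℕ} [NeZero N]
    {f : A → Fin N} (hf : ∀ a, ∃ b, f b = f a + 1) : Surjective f := by
  obtain ⟨a₀⟩ := ‹Nonempty A›
  have hiter : ∀ k : ℕ, ∃ a, f a = f a₀ + (k : Fin N) := by
    intro k
    induction k with
    | zero => exact ⟨a₀, by simp⟩
    | succ k ih =>
      obtain ⟨a, ha⟩ := ih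
      obtain ⟨b, hb⟩ := hf a
      exact ⟨b, by rw [hb, ha, Nat.cast_succ, add_assoc]⟩
  intro x
  obtain ⟨a, ha⟩ := hiter (x - f a₀).val
  exact ⟨a, by rw [ha, Fin.cast_val_eq_self, add_sub_cancel]⟩

theorem stmt_10 (n m : ℕ)
    (C : (Fin n → Bool) → (Fin m → Bool) → (Fin n → Bool) → (Fin m → Bool) → Prop) :
    (∃ g : (Fin n → Bool) → (Fin m → Bool),
        ∀ w w' : Fin n → Bool, C w (g w) w' (g w'))
      ↔
    (∃ (A : Type) (_ : Nonempty A) (r : A → (Fin n → Bool)) (s : A → (Fin m → Bool)),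
        (∀ a b : A, r a = r b → s a = s b) ∧
        (∀ a b : A, C (r a) (s a) (r b) (s b)) ∧
        (∀ a : A, ∃ b : A, num (r b) = (num (r a) + 1) % 2 ^ n)) := by
  constructor
  · rintro ⟨g, hg⟩
    exact ⟨Fin n → Bool, ⟨fun _ => false⟩, id, g, fun _ _ h => congrArg g h, hg,
      fun _ => exists_num_eq (Nat.mod_lt _ (Nat.two_pow_pos n))⟩
  · rintro ⟨A, hA, r, s, -, hC, hsucc⟩
    have hr : Surjective r := by
      refine (Equiv.comp_surjective r (numEquiv n)).mp ?_
      exact Fin.surjective_of_forall_exists_eq_add_one fun a =>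
        (hsucc a).imp fun b => (num_eq_num_add_one_mod_iff (r a) (r b)).mp
    refine ⟨s ∘ surjInv hr, fun w w' => ?_⟩
    simpa only [comp_apply, surjInv_eq hr] using hC (surjInv hr w) (surjInv hr w')
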